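/- arXiv:1711.03795 — 4 statements merged into one kernel-verified Lean document; each statement's English description precedes it below -/
import Mathlib

section
/- Let T : ℝ → ℝ², let s > 0, let u ≤ w ≤ v be real numbers, and let r₁ and r₂ be axis-parallel squares of side s such that T_{uw} is contained in r₁ and T_{wv} is contained in r₂. Then max(W(r₁), W(r₂)) ≥ H_s(T,[u,v]) / 2, where W denotes weight with respect to T and [u,v]. -/
open Set

/-- `r` is an axis-parallel square of side `s`, i.e. `[p, p+s] × [q, q+s]`. -/
def IsAPSquare (s : ℝ) (r : Set (ℝ × ℝ)) : Prop :=
  ∃ p q : ℝ, r = Icc p (p + s) ×ˢ Icc q (q + s)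

/-- The weight of a region `r` with respect to the trajectory `T` and the
time window `[u, v]`: the supremum of durations `d - c` of subtrajectories
`T_{cd}` (with `u ≤ c ≤ d ≤ v`) contained in `r`. -/
noncomputable def weight (T : ℝ → ℝ × ℝ) (u v : ℝ) (r : Set (ℝ × ℝ)) : ℝ :=
  sSup { w : ℝ | ∃ c d : ℝ, u ≤ c ∧ c ≤ d ∧ d ≤ v ∧
    (∀ τ ∈ Icc c d, T τ ∈ r) ∧ w = d - c }

/-- The hotspot weight `H_s(T, [u, v])`: the supremum of the weights of all
axis-parallel squares of side `s` with respect to `T` and `[u, v]`. -/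
noncomputable def hotspotWeight (s : ℝ) (T : ℝ → ℝ × ℝ) (u v : ℝ) : ℝ :=
  sSup { w : ℝ | ∃ r : Set (ℝ × ℝ), IsAPSquare s r ∧ w = weight T u v r }

/-- `D₋(t)` with respect to the window starting at `u`: the supremum of
durations `t - c` with `u ≤ c ≤ t` such that `T_{ct}` is contained in some
axis-parallel square of side `s`. -/
noncomputable def Dminus (s : ℝ) (T : ℝ → ℝ × ℝ) (u t : ℝ) : ℝ :=
  sSup { w : ℝ | ∃ c : ℝ, u ≤ c ∧ c ≤ t ∧
    (∃ r : Set (ℝ × ℝ), IsAPSquare s r ∧ ∀ τ ∈ Icc c t, T τ ∈ r) ∧ w = t - c }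

/-- `D₊(t)` with respect to the window ending at `v`: the supremum of
durations `d - t` with `t ≤ d ≤ v` such that `T_{td}` is contained in some
axis-parallel square of side `s`. -/
noncomputable def Dplus (s : ℝ) (T : ℝ → ℝ × ℝ) (v t : ℝ) : ℝ :=
  sSup { w : ℝ | ∃ d : ℝ, t ≤ d ∧ d ≤ v ∧
    (∃ r : Set (ℝ × ℝ), IsAPSquare s r ∧ ∀ τ ∈ Icc t d, T τ ∈ r) ∧ w = d - t }

lemma weight_bddAbove (T : ℝ → ℝ × ℝ) (u v : ℝ) (r : Set (ℝ × ℝ)) :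
    BddAbove { w : ℝ | ∃ c d : ℝ, u ≤ c ∧ c ≤ d ∧ d ≤ v ∧
      (∀ τ ∈ Icc c d, T τ ∈ r) ∧ w = d - c } := by
  refine ⟨v - u, ?_⟩
  rintro x ⟨c, d, h1, h2, h3, _, rfl⟩
  linarith

lemma le_weight (T : ℝ → ℝ × ℝ) (u v c d : ℝ) (r : Set (ℝ × ℝ))
    (h1 : u ≤ c) (h2 : c ≤ d) (h3 : d ≤ v) (h4 : ∀ τ ∈ Icc c d, T τ ∈ r) :
    d - c ≤ weight T u v r :=
  le_csSup (weight_bddAbove T u v r) ⟨c, d, h1, h2, h3, h4, rfl⟩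

/-- If `T_{uw}` is contained in the side-`s` square `r₁` and
`T_{wv}` is contained in the side-`s` square `r₂`, then the larger of their
weights is at least half of the hotspot weight `H_s(T, [u, v])`. -/
theorem max_weight_ge_half_hotspotWeight (T : ℝ → ℝ × ℝ) (s : ℝ) (hs : 0 < s)
    (u w v : ℝ) (huw : u ≤ w) (hwv : w ≤ v)
    (r₁ r₂ : Set (ℝ × ℝ)) (h₁ : IsAPSquare s r₁) (h₂ : IsAPSquare s r₂)
    (hc₁ : ∀ τ ∈ Set.Icc u w, T τ ∈ r₁) (hc₂ : ∀ τ ∈ Set.Icc w v, T τ ∈ r₂) :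
    hotspotWeight s T u v / 2 ≤ max (weight T u v r₁) (weight T u v r₂) := by
  set M := max (weight T u v r₁) (weight T u v r₂) with hM
  have h0 : (0:ℝ) ≤ weight T u v r₁ := by
    have := le_weight T u v u u r₁ le_rfl le_rfl (huw.trans hwv)
      (fun τ hτ => hc₁ τ ⟨hτ.1, hτ.2.trans huw⟩)
    linarith
  have hM0 : (0:ℝ) ≤ M := h0.trans (le_max_left _ _)
  have key : hotspotWeight s T u v ≤ 2 * M := by
    apply Real.sSup_le _ (by linarith)
    rintro x ⟨r, hr, rfl⟩
    apply Real.sSup_le _ (by linarith)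
    rintro x ⟨c, d, h1, h2, h3, h4, rfl⟩
    rcases le_total d w with hdw | hwd
    · have : d - c ≤ weight T u v r₁ :=
        le_weight T u v c d r₁ h1 h2 (hdw.trans hwv)
          (fun τ hτ => hc₁ τ ⟨h1.trans hτ.1, hτ.2.trans hdw⟩)
      have : weight T u v r₁ ≤ M := le_max_left _ _
      linarith [le_weight T u v c d r₁ h1 h2 (hdw.trans hwv)
          (fun τ hτ => hc₁ τ ⟨h1.trans hτ.1, hτ.2.trans hdw⟩)]
    · rcases le_total w c with hwc | hcw
      · have := le_weight T u v c d r₂ (huw.trans hwc) h2 h3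
          (fun τ hτ => hc₂ τ ⟨hwc.trans hτ.1, hτ.2.trans h3⟩)
        have h2M : weight T u v r₂ ≤ M := le_max_right _ _
        linarith
      · have hA := le_weight T u v c w r₁ h1 hcw hwv
          (fun τ hτ => hc₁ τ ⟨h1.trans hτ.1, hτ.2⟩)
        have hB := le_weight T u v w d r₂ huw hwd h3
          (fun τ hτ => hc₂ τ ⟨hτ.1, hτ.2.trans h3⟩)
        have h1M : weight T u v r₁ ≤ M := le_max_left _ _
        have h2M : weight T u v r₂ ≤ M := le_max_right _ _
        linarith
  linarith
end

section
/- Let T : ℝ → ℝ², let s > 0, and let u ≤ w ≤ v be real numbers. Then H_s(T,[u,v]) = max( sup_{t ∈ [u,w]} D₊(t), sup_{t ∈ [w,v]} D₋(t) ): the hotspot weight of T over [u,v] equals the larger of the best duration of a square-contained subtrajectory starting at a time in [u,w] and the best duration of a square-contained subtrajectory ending at a time in [w,v]. -/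
open Set

lemma sq_mem (s : ℝ) (hs : 0 < s) (x : ℝ × ℝ) :
    ∃ r : Set (ℝ × ℝ), IsAPSquare s r ∧ x ∈ r := by
  refine ⟨Icc x.1 (x.1 + s) ×ˢ Icc x.2 (x.2 + s), ⟨x.1, x.2, rfl⟩, ?_, ?_⟩ <;>
    exact ⟨le_refl _, le_add_of_nonneg_right hs.le⟩

/-- For any split point `w` of the window `[u, v]`, the hotspot
weight `H_s(T, [u, v])` equals the larger of the best square-contained
duration starting at a time in `[u, w]` and the best square-contained
duration ending at a time in `[w, v]`. -/
theorem hotspotWeight_eq_max_sup_Dplus_sup_Dminus (T : ℝ → ℝ × ℝ) (s : ℝ)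
    (hs : 0 < s) (u w v : ℝ) (huw : u ≤ w) (hwv : w ≤ v) :
    hotspotWeight s T u v =
      max (sSup ((fun t => Dplus s T v t) '' Icc u w))
          (sSup ((fun t => Dminus s T u t) '' Icc w v)) := by

  have huv : u ≤ v := huw.trans hwv
  set A : Set ℝ := {a | ∃ c d : ℝ, u ≤ c ∧ c ≤ d ∧ d ≤ v ∧
    (∃ r : Set (ℝ × ℝ), IsAPSquare s r ∧ ∀ τ ∈ Icc c d, T τ ∈ r) ∧ a = d - c} with hAdef
  have hAbdd : BddAbove A := by
    refine ⟨v - u, ?_⟩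
    rintro a ⟨c, d, h1, h2, h3, -, rfl⟩; simp; linarith
  have h0A : (0:ℝ) ∈ A := by
    obtain ⟨r, hr, hx⟩ := sq_mem s hs (T u)
    refine ⟨u, u, le_refl u, le_refl u, huv, ⟨r, hr, fun τ hτ => ?_⟩, by ring⟩
    have : τ = u := le_antisymm hτ.2 hτ.1
    rw [this]; exact hx
  have hA0 : 0 ≤ sSup A := le_csSup hAbdd h0A
  have hWub : ∀ r : Set (ℝ × ℝ), weight T u v r ≤ v - u := by
    intro r
    apply Real.sSup_le
    · rintro y ⟨c, d, h1, h2, h3, -, rfl⟩; linarith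
    · linarith
  have hHbdd : BddAbove {w : ℝ | ∃ r : Set (ℝ × ℝ), IsAPSquare s r ∧ w = weight T u v r} := by
    refine ⟨v - u, ?_⟩
    rintro y ⟨r, -, rfl⟩; exact hWub r
  -- hotspotWeight = sSup A
  have hH : hotspotWeight s T u v = sSup A := by
    apply le_antisymm
    · apply Real.sSup_le _ hA0
      rintro x ⟨r, hr, rfl⟩
      apply Real.sSup_le _ hA0
      rintro y ⟨c, d, h1, h2, h3, hc, rfl⟩
      exact le_csSup hAbdd ⟨c, d, h1, h2, h3, ⟨r, hr, hc⟩, rfl⟩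
    · apply Real.sSup_le
      · rintro a ⟨c, d, h1, h2, h3, ⟨r, hr, hc⟩, rfl⟩
        have h1' : d - c ≤ weight T u v r := by
          apply le_csSup
          · refine ⟨v - u, ?_⟩
            rintro y ⟨c', d', g1, g2, g3, -, rfl⟩; simp; linarith
          · exact ⟨c, d, h1, h2, h3, hc, rfl⟩
        have h2' : weight T u v r ≤ hotspotWeight s T u v :=
          le_csSup hHbdd ⟨r, hr, rfl⟩
        linarith
      · obtain ⟨r, hr, hx⟩ := sq_mem s hs (T u)
        have h0w : 0 ≤ weight T u v r := by
          apply le_csSup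
          · refine ⟨v - u, ?_⟩
            rintro y ⟨c', d', g1, g2, g3, -, rfl⟩; simp; linarith
          · refine ⟨u, u, le_refl u, le_refl u, huv, fun τ hτ => ?_, by ring⟩
            have : τ = u := le_antisymm hτ.2 hτ.1
            rw [this]; exact hx
        exact h0w.trans (le_csSup hHbdd ⟨r, hr, rfl⟩)
  have hPbdd : BddAbove ((fun t => Dplus s T v t) '' Icc u w) := by
    refine ⟨v - u, ?_⟩
    rintro x ⟨t, ht, rfl⟩
    apply Real.sSup_le
    · rintro y ⟨d, g1, g2, -, rfl⟩
      have := ht.1; simp; linarith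
    · linarith
  have hMbdd : BddAbove ((fun t => Dminus s T u t) '' Icc w v) := by
    refine ⟨v - u, ?_⟩
    rintro x ⟨t, ht, rfl⟩
    apply Real.sSup_le
    · rintro y ⟨c, g1, g2, -, rfl⟩
      have := ht.2; simp; linarith
    · linarith
  have hPle : sSup ((fun t => Dplus s T v t) '' Icc u w) ≤ sSup A := by
    apply Real.sSup_le _ hA0
    rintro x ⟨t, ht, rfl⟩
    apply Real.sSup_le _ hA0
    rintro y ⟨d, g1, g2, hsq, rfl⟩
    exact le_csSup hAbdd ⟨t, d, ht.1, g1, g2, hsq, rfl⟩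
  have hMle : sSup ((fun t => Dminus s T u t) '' Icc w v) ≤ sSup A := by
    apply Real.sSup_le _ hA0
    rintro x ⟨t, ht, rfl⟩
    apply Real.sSup_le _ hA0
    rintro y ⟨c, g1, g2, hsq, rfl⟩
    exact le_csSup hAbdd ⟨c, t, g1, g2, ht.2, hsq, rfl⟩
  have hAle : sSup A ≤ max (sSup ((fun t => Dplus s T v t) '' Icc u w))
      (sSup ((fun t => Dminus s T u t) '' Icc w v)) := by
    apply Real.sSup_le
    · rintro a ⟨c, d, h1, h2, h3, hsq, rfl⟩
      by_cases hcw : c ≤ w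
      · refine le_max_of_le_left ?_
        have h1' : d - c ≤ Dplus s T v c := by
          apply le_csSup
          · refine ⟨v - c, ?_⟩
            rintro y ⟨d', g1, g2, -, rfl⟩; simp; linarith
          · exact ⟨d, h2, h3, hsq, rfl⟩
        have h2' : Dplus s T v c ≤ sSup ((fun t => Dplus s T v t) '' Icc u w) :=
          le_csSup hPbdd ⟨c, ⟨h1, hcw⟩, rfl⟩
        linarith
      · push_neg at hcw
        refine le_max_of_le_right ?_
        have h1' : d - c ≤ Dminus s T u d := by
          apply le_csSup
          · refine ⟨d - u, ?_⟩
            rintro y ⟨c', g1, g2, -, rfl⟩; simp; linarith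
          · exact ⟨c, h1, h2, hsq, rfl⟩
        have h2' : Dminus s T u d ≤ sSup ((fun t => Dminus s T u t) '' Icc w v) :=
          le_csSup hMbdd ⟨d, ⟨le_of_lt (lt_of_lt_of_le hcw h2), h3⟩, rfl⟩
        linarith
    · refine le_max_of_le_left ?_
      obtain ⟨r, hr, hx⟩ := sq_mem s hs (T u)
      have h0p : 0 ≤ Dplus s T v u := by
        apply le_csSup
        · refine ⟨v - u, ?_⟩
          rintro y ⟨d', g1, g2, -, rfl⟩; simp; linarith
        · refine ⟨u, le_refl u, huv, ⟨r, hr, fun τ hτ => ?_⟩, by ring⟩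
          have : τ = u := le_antisymm hτ.2 hτ.1
          rw [this]; exact hx
      exact h0p.trans (le_csSup hPbdd ⟨u, ⟨le_refl u, huw⟩, rfl⟩)
  rw [hH]
  exact le_antisymm hAle (max_le hPle hMle)
end

section
/- Let T : ℝ → ℝ² be continuous on [a,b] with a ≤ b and let s > 0. Then the hotspot weight is attained: there exist an axis-parallel square r of side s and times u, v with a ≤ u ≤ v ≤ b such that T_{uv} is contained in r and v − u = H_s(T,[a,b]). -/
open Set

/-!
A stretch `T_{cd}` fits into some side-`s` square exactly when any two of its points are at
sup-distance at most `s`. For `c < d` and `T` continuous it suffices to ask this for times in the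
open interval `(c, d)`, and that condition defines a closed set of pairs `(c, d)`. So the pairs
`a ≤ c ≤ d ≤ b` for which `T_{cd}` fits form a compact set, on which the duration `d - c` attains
its maximum; this maximum is the hotspot weight.
-/

theorem exists_Icc_superset_of_forall_sub_le {A : Set ℝ} {s : ℝ}
    (h : ∀ x ∈ A, ∀ y ∈ A, x - y ≤ s) : ∃ p, A ⊆ Icc p (p + s) := by
  rcases A.eq_empty_or_nonempty with rfl | ⟨y₀, hy₀⟩
  · exact ⟨0, empty_subset _⟩
  have hbdd : BddBelow A := ⟨y₀ - s, fun x hx => by linarith [h y₀ hy₀ x hx]⟩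
  refine ⟨sInf A, fun x hx => ⟨csInf_le hbdd hx, ?_⟩⟩
  have : x - s ≤ sInf A := le_csInf ⟨y₀, hy₀⟩ fun y hy => by linarith [h x hx y hy]
  linarith

theorem exists_isAPSquare_superset_iff {S : Set (ℝ × ℝ)} {s : ℝ} :
    (∃ r, IsAPSquare s r ∧ S ⊆ r) ↔ ∀ x ∈ S, ∀ y ∈ S, dist x y ≤ s := by
  constructor
  · rintro ⟨_, ⟨p, q, rfl⟩, hS⟩ x hx y hy
    obtain ⟨hx₁, hx₂⟩ := hS hx
    obtain ⟨hy₁, hy₂⟩ := hS hy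
    rw [Prod.dist_eq]
    exact max_le (by simpa using Real.dist_le_of_mem_Icc hx₁ hy₁)
      (by simpa using Real.dist_le_of_mem_Icc hx₂ hy₂)
  · intro h
    have hcoord : ∀ x ∈ S, ∀ y ∈ S, x.1 - y.1 ≤ s ∧ x.2 - y.2 ≤ s := fun x hx y hy => by
      have hxy := h x hx y hy
      rw [Prod.dist_eq, max_le_iff, Real.dist_eq, Real.dist_eq] at hxy
      exact ⟨(le_abs_self _).trans hxy.1, (le_abs_self _).trans hxy.2⟩
    obtain ⟨p, hp⟩ := exists_Icc_superset_of_forall_sub_le (A := Prod.fst '' S) (s := s)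
      (forall_mem_image.2 fun x hx => forall_mem_image.2 fun y hy => (hcoord x hx y hy).1)
    obtain ⟨q, hq⟩ := exists_Icc_superset_of_forall_sub_le (A := Prod.snd '' S) (s := s)
      (forall_mem_image.2 fun x hx => forall_mem_image.2 fun y hy => (hcoord x hx y hy).2)
    exact ⟨_, ⟨p, q, rfl⟩, fun x hx => ⟨hp (mem_image_of_mem _ hx), hq (mem_image_of_mem _ hx)⟩⟩

theorem dist_le_of_mem_closure {X : Type*} [PseudoMetricSpace X] {S : Set X} {s : ℝ}
    (h : ∀ x ∈ S, ∀ y ∈ S, dist x y ≤ s) {x y : X} (hx : x ∈ closure S) (hy : y ∈ closure S) :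
    dist x y ≤ s := by
  have : closure (S ×ˢ S) ⊆ {p : X × X | dist p.1 p.2 ≤ s} :=
    closure_minimal (fun p hp => h _ hp.1 _ hp.2) (isClosed_le continuous_dist continuous_const)
  exact this (show (x, y) ∈ closure (S ×ˢ S) by rw [closure_prod_eq]; exact ⟨hx, hy⟩)

theorem isClosed_setOf_forall_mem_Ioo (Q : ℝ → ℝ → Prop) :
    IsClosed {p : ℝ × ℝ | ∀ τ ∈ Ioo p.1 p.2, ∀ σ ∈ Ioo p.1 p.2, Q τ σ} := by
  have : {p : ℝ × ℝ | ∀ τ ∈ Ioo p.1 p.2, ∀ σ ∈ Ioo p.1 p.2, Q τ σ} =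
      ⋂ τ, ⋂ σ, ⋂ (_ : ¬ Q τ σ), ((Iio τ ×ˢ Ioi τ) ∩ (Iio σ ×ˢ Ioi σ))ᶜ := by
    ext p
    simp only [mem_iInter]
    constructor
    · rintro h τ σ hQ ⟨hτ, hσ⟩
      exact hQ (h τ hτ σ hσ)
    · intro h τ hτ σ hσ
      by_contra hQ
      exact h τ σ hQ ⟨hτ, hσ⟩
  rw [this]
  exact isClosed_iInter fun τ => isClosed_iInter fun σ => isClosed_iInter fun _ =>
    ((isOpen_Iio.prod isOpen_Ioi).inter (isOpen_Iio.prod isOpen_Ioi)).isClosed_compl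

theorem exists_isAPSquare_mapsTo_iff {T : ℝ → ℝ × ℝ} {s c d : ℝ} (hs : 0 ≤ s) (hcd : c ≤ d)
    (hT : ContinuousOn T (Icc c d)) :
    (∃ r, IsAPSquare s r ∧ ∀ τ ∈ Icc c d, T τ ∈ r) ↔
      ∀ τ ∈ Ioo c d, ∀ σ ∈ Ioo c d, dist (T τ) (T σ) ≤ s := by
  have hIcc : (∃ r, IsAPSquare s r ∧ ∀ τ ∈ Icc c d, T τ ∈ r) ↔
      ∀ τ ∈ Icc c d, ∀ σ ∈ Icc c d, dist (T τ) (T σ) ≤ s := by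
    have h := exists_isAPSquare_superset_iff (S := T '' Icc c d) (s := s)
    simp only [image_subset_iff, forall_mem_image] at h
    exact h
  rw [hIcc]
  refine ⟨fun h τ hτ σ hσ => h τ (Ioo_subset_Icc_self hτ) σ (Ioo_subset_Icc_self hσ), fun h => ?_⟩
  rcases hcd.eq_or_lt with rfl | hlt
  · intro τ hτ σ hσ
    rw [Icc_self, mem_singleton_iff] at hτ hσ
    rw [hτ, hσ, dist_self]
    exact hs
  · rw [← closure_Ioo hlt.ne] at hT ⊢
    intro τ hτ σ hσ
    exact dist_le_of_mem_closure (S := T '' Ioo c d)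
      (forall_mem_image.2 fun τ hτ => forall_mem_image.2 fun σ hσ => h τ hτ σ hσ)
      (hT.image_closure (mem_image_of_mem T hτ)) (hT.image_closure (mem_image_of_mem T hσ))

section Weight

variable {T : ℝ → ℝ × ℝ} {a b c d s M : ℝ} {r : Set (ℝ × ℝ)}

theorem weight_le (hM : 0 ≤ M)
    (h : ∀ c d, a ≤ c → c ≤ d → d ≤ b → (∀ τ ∈ Icc c d, T τ ∈ r) → d - c ≤ M) :
    weight T a b r ≤ M :=
  Real.sSup_le (by rintro _ ⟨c, d, hac, hcd, hdb, hr, rfl⟩; exact h c d hac hcd hdb hr) hM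

theorem le_weight_s8 (hac : a ≤ c) (hcd : c ≤ d) (hdb : d ≤ b) (hr : ∀ τ ∈ Icc c d, T τ ∈ r) :
    d - c ≤ weight T a b r :=
  le_csSup ⟨b - a, by rintro _ ⟨c', d', h₁, h₂, h₃, -, rfl⟩; linarith⟩
    ⟨c, d, hac, hcd, hdb, hr, rfl⟩

theorem hotspotWeight_le (hM : 0 ≤ M) (h : ∀ r, IsAPSquare s r → weight T a b r ≤ M) :
    hotspotWeight s T a b ≤ M :=
  Real.sSup_le (by rintro _ ⟨r, hr, rfl⟩; exact h r hr) hM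

theorem weight_le_hotspotWeight (hab : a ≤ b) (hr : IsAPSquare s r) :
    weight T a b r ≤ hotspotWeight s T a b :=
  le_csSup ⟨b - a, by
    rintro _ ⟨r', -, rfl⟩
    exact weight_le (sub_nonneg.2 hab) fun c d h₁ h₂ h₃ _ => by linarith⟩ ⟨r, hr, rfl⟩

end Weight

/-- For `T` continuous on `[a, b]` (`a ≤ b`) and `s > 0`, the
hotspot weight is attained: there are a side-`s` axis-parallel square `r` and
times `a ≤ u ≤ v ≤ b` with `T_{uv}` contained in `r` and
`v - u = H_s(T, [a, b])`. -/
theorem hotspotWeight_attained (T : ℝ → ℝ × ℝ) (a b s : ℝ) (hab : a ≤ b)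
    (hs : 0 < s) (hT : ContinuousOn T (Icc a b)) :
    ∃ (r : Set (ℝ × ℝ)) (u v : ℝ), IsAPSquare s r ∧
      a ≤ u ∧ u ≤ v ∧ v ≤ b ∧ (∀ τ ∈ Icc u v, T τ ∈ r) ∧
      v - u = hotspotWeight s T a b := by
  have fits_iff {c d : ℝ} (hac : a ≤ c) (hcd : c ≤ d) (hdb : d ≤ b) :=
    exists_isAPSquare_mapsTo_iff hs.le hcd (hT.mono (Icc_subset_Icc hac hdb))
  set K : Set (ℝ × ℝ) := Icc a b ×ˢ Icc a b ∩ {p | p.1 ≤ p.2} ∩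
    {p | ∀ τ ∈ Ioo p.1 p.2, ∀ σ ∈ Ioo p.1 p.2, dist (T τ) (T σ) ≤ s}
  have hK : IsCompact K :=
    ((isCompact_Icc.prod isCompact_Icc).inter_right (isClosed_le continuous_fst continuous_snd)
      ).inter_right (isClosed_setOf_forall_mem_Ioo _)
  have haa : (a, a) ∈ K :=
    ⟨⟨⟨⟨le_rfl, hab⟩, le_rfl, hab⟩, le_refl a⟩, fun τ hτ => (lt_asymm hτ.1 hτ.2).elim⟩
  obtain ⟨⟨u, v⟩, ⟨⟨⟨⟨hau, -⟩, -, hvb⟩, huv⟩, hfit⟩, hmax⟩ :=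
    hK.exists_isMaxOn ⟨_, haa⟩ (continuous_snd.sub continuous_fst).continuousOn
  obtain ⟨r, hr, hmem⟩ := (fits_iff hau huv hvb).2 hfit
  refine ⟨r, u, v, hr, hau, huv, hvb, hmem, le_antisymm ?_ ?_⟩
  · exact (le_weight_s8 hau huv hvb hmem).trans (weight_le_hotspotWeight hab hr)
  · refine hotspotWeight_le (sub_nonneg.2 huv) fun r hr => weight_le (sub_nonneg.2 huv) ?_
    intro c d hac hcd hdb hmem
    have hcdK : (c, d) ∈ K :=
      ⟨⟨⟨⟨hac, hcd.trans hdb⟩, hac.trans hcd, hdb⟩, hcd⟩, (fits_iff hac hcd hdb).1 ⟨r, hr, hmem⟩⟩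
    exact hmax hcdK
end

section
/- Let T : ℝ → ℝ² be polygonal with vertex times t₀ < t₁ < ... < t_n and let s > 0. Then 2 · max_{0 ≤ i ≤ n} max(D₋(tᵢ), D₊(tᵢ)) ≥ H_s(T,[t₀,t_n]), where D₋ and D₊ are taken with respect to the full interval [t₀,t_n]: the best square-contained subtrajectory starting or ending at a trajectory vertex has duration at least half the hotspot weight of the whole trajectory. -/
open Set

/-- For a polygonal trajectory with vertex times
`t 0 < t 1 < ... < t n` and `s > 0`, twice the best square-contained
duration starting or ending at a trajectory vertex is at least the hotspot
weight of the whole trajectory. -/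
theorem vertex_anchored_ge_half_hotspotWeight (n : ℕ) (t : Fin (n + 1) → ℝ)
    (ht : StrictMono t) (T : ℝ → ℝ × ℝ) (s : ℝ) (hs : 0 < s)
    (hcont : ContinuousOn T (Icc (t 0) (t (Fin.last n))))
    (haff : ∀ i : Fin n, ∃ A V : ℝ × ℝ,
      ∀ τ ∈ Icc (t i.castSucc) (t i.succ), T τ = A + τ • V) :
    hotspotWeight s T (t 0) (t (Fin.last n)) ≤
      2 * Finset.univ.sup' Finset.univ_nonempty
        (fun i : Fin (n + 1) =>
          max (Dminus s T (t 0) (t i)) (Dplus s T (t (Fin.last n)) (t i))) := by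
  set M := Finset.univ.sup' Finset.univ_nonempty
      (fun i : Fin (n + 1) =>
        max (Dminus s T (t 0) (t i)) (Dplus s T (t (Fin.last n)) (t i))) with hM
  -- Dminus sets are bounded above
  have hDmbdd : ∀ i : Fin (n + 1), BddAbove { w : ℝ | ∃ c : ℝ, t 0 ≤ c ∧ c ≤ t i ∧
      (∃ r : Set (ℝ × ℝ), IsAPSquare s r ∧ ∀ τ ∈ Icc c (t i), T τ ∈ r) ∧ w = t i - c } := by
    intro i
    refine ⟨t i - t 0, ?_⟩
    rintro w ⟨c, h1, h2, _, rfl⟩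
    linarith
  have hDpbdd : ∀ i : Fin (n + 1), BddAbove { w : ℝ | ∃ d : ℝ, t i ≤ d ∧ d ≤ t (Fin.last n) ∧
      (∃ r : Set (ℝ × ℝ), IsAPSquare s r ∧ ∀ τ ∈ Icc (t i) d, T τ ∈ r) ∧ w = d - t i } := by
    intro i
    refine ⟨t (Fin.last n) - t i, ?_⟩
    rintro w ⟨d, h1, h2, _, rfl⟩
    linarith
  have hle_sup : ∀ i : Fin (n + 1),
      max (Dminus s T (t 0) (t i)) (Dplus s T (t (Fin.last n)) (t i)) ≤ M := by
    intro i
    exact Finset.le_sup' (fun i : Fin (n + 1) =>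
      max (Dminus s T (t 0) (t i)) (Dplus s T (t (Fin.last n)) (t i))) (Finset.mem_univ i)
  -- for a single point there is a square containing it
  have hpt : ∀ x : ℝ × ℝ, ∃ r : Set (ℝ × ℝ), IsAPSquare s r ∧ x ∈ r := by
    intro x
    refine ⟨Icc x.1 (x.1 + s) ×ˢ Icc x.2 (x.2 + s), ⟨x.1, x.2, rfl⟩, ?_⟩
    exact ⟨⟨le_refl _, by linarith⟩, ⟨le_refl _, by linarith⟩⟩
  -- M is nonnegative
  have hM0 : 0 ≤ M := by
    have h0 : (0 : ℝ) ≤ Dminus s T (t 0) (t 0) := by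
      obtain ⟨r, hr, hxr⟩ := hpt (T (t 0))
      refine le_csSup (hDmbdd 0) ?_
      refine ⟨t 0, le_refl _, le_refl _, ⟨r, hr, ?_⟩, by ring⟩
      intro τ hτ
      have : τ = t 0 := le_antisymm hτ.2 hτ.1
      rw [this]; exact hxr
    calc (0:ℝ) ≤ Dminus s T (t 0) (t 0) := h0
      _ ≤ max (Dminus s T (t 0) (t 0)) (Dplus s T (t (Fin.last n)) (t 0)) := le_max_left _ _
      _ ≤ M := hle_sup 0
  -- key estimate: any square-contained duration is at most 2 * M
  have key : ∀ (r : Set (ℝ × ℝ)) (c d : ℝ), IsAPSquare s r → t 0 ≤ c → c ≤ d →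
      d ≤ t (Fin.last n) → (∀ τ ∈ Icc c d, T τ ∈ r) → d - c ≤ 2 * M := by
    intro r c d hsq hc hcd hd hcont'
    by_cases hvert : ∃ i : Fin (n + 1), t i ∈ Icc c d
    · obtain ⟨i, hi1, hi2⟩ := hvert
      have h1 : t i - c ≤ Dminus s T (t 0) (t i) := by
        refine le_csSup (hDmbdd i) ⟨c, hc, hi1, ⟨r, hsq, ?_⟩, rfl⟩
        intro τ hτ
        exact hcont' τ ⟨hτ.1, le_trans hτ.2 hi2⟩
      have h2 : d - t i ≤ Dplus s T (t (Fin.last n)) (t i) := by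
        refine le_csSup (hDpbdd i) ⟨d, hi2, hd, ⟨r, hsq, ?_⟩, rfl⟩
        intro τ hτ
        exact hcont' τ ⟨le_trans hi1 hτ.1, hτ.2⟩
      have h3 := le_trans (le_trans h1 (le_max_left _ _)) (hle_sup i)
      have h4 := le_trans (le_trans h2 (le_max_right _ _)) (hle_sup i)
      linarith
    · push_neg at hvert
      -- no vertex in [c,d]; find the segment containing [c,d]
      have h0c : t 0 < c := by
        rcases lt_or_ge (t 0) c with h | h
        · exact h
        · exact absurd ⟨h, hc.trans hcd⟩ (hvert 0)
      have hdl : d < t (Fin.last n) := by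
        rcases lt_or_ge d (t (Fin.last n)) with h | h
        · exact h
        · exact absurd ⟨le_trans hcd (le_antisymm hd h).le, le_antisymm hd h ▸ le_refl d⟩
            (hvert (Fin.last n))
      have hcl : c < t (Fin.last n) := lt_of_le_of_lt hcd hdl
      set F : Finset (Fin (n + 1)) := Finset.univ.filter (fun j => t j < c) with hF
      have hF0 : (0 : Fin (n + 1)) ∈ F := by
        simp [hF, h0c]
      have hFne : F.Nonempty := ⟨0, hF0⟩
      set i : Fin (n + 1) := F.max' hFne with hi
      have hiF : i ∈ F := F.max'_mem hFne
      have hic : t i < c := by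
        have := hiF; simp [hF] at this; exact this
      have hin : i.1 < n := by
        rcases lt_or_eq_of_le (Nat.lt_succ_iff.mp i.2) with h | h
        · exact h
        · exfalso
          have : i = Fin.last n := Fin.ext h
          rw [this] at hic
          linarith
      set j : Fin n := ⟨i.1, hin⟩ with hj
      have hjcs : j.castSucc = i := Fin.ext rfl
      have hsuccF : j.succ ∉ F := by
        intro hmem
        have := F.le_max' j.succ hmem
        rw [← hi] at this
        have hval : j.succ.1 ≤ i.1 := this
        simp [Fin.val_succ, hj] at hval
      have hcsucc : c ≤ t j.succ := by
        by_contra h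
        push_neg at h
        exact hsuccF (by simp [hF, h])
      have hdsucc : d < t j.succ := by
        rcases lt_or_ge d (t j.succ) with h | h
        · exact h
        · exact absurd ⟨hcsucc, h⟩ (hvert j.succ)
      have hsuccle : t j.succ ≤ t (Fin.last n) := ht.monotone (Fin.le_last _)
      obtain ⟨A, V, hAV⟩ := haff j
      rw [hjcs] at hAV
      obtain ⟨p, q, hrpq⟩ := hsq
      -- translate the square by (t i - c) • V
      set r' : Set (ℝ × ℝ) := Icc (p + (t i - c) * V.1) (p + (t i - c) * V.1 + s) ×ˢ
        Icc (q + (t i - c) * V.2) (q + (t i - c) * V.2 + s) with hr'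
      have hd' : t i + (d - c) ≤ t (Fin.last n) := by linarith
      have helem : d - c ≤ Dplus s T (t (Fin.last n)) (t i) := by
        refine le_csSup (hDpbdd i) ⟨t i + (d - c), by linarith, hd', ⟨r', ⟨_, _, rfl⟩, ?_⟩,
          by ring⟩
        intro τ hτ
        set σ := τ + (c - t i) with hσ
        have hσcd : σ ∈ Icc c d := ⟨by simp [hσ]; linarith [hτ.1], by simp [hσ]; linarith [hτ.2]⟩
        have hσseg : σ ∈ Icc (t i) (t j.succ) := ⟨by linarith [hσcd.1], by linarith [hσcd.2]⟩
        have hτseg : τ ∈ Icc (t i) (t j.succ) := ⟨hτ.1, by linarith [hτ.2]⟩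
        have hTσ : T σ = A + σ • V := hAV σ hσseg
        have hTτ : T τ = A + τ • V := hAV τ hτseg
        have hσr : T σ ∈ r := hcont' σ hσcd
        rw [hrpq] at hσr
        rw [hTσ] at hσr
        obtain ⟨hσ1, hσ2⟩ := hσr
        simp only [Prod.fst_add, Prod.snd_add, Prod.smul_fst, Prod.smul_snd, smul_eq_mul,
          mem_Icc] at hσ1 hσ2
        rw [hTτ, hr']
        have e1 : A.1 + σ * V.1 = A.1 + τ * V.1 + (c - t i) * V.1 := by rw [hσ]; ring
        have e2 : A.2 + σ * V.2 = A.2 + τ * V.2 + (c - t i) * V.2 := by rw [hσ]; ring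
        constructor
        · simp only [Prod.fst_add, Prod.smul_fst, smul_eq_mul, mem_Icc]
          constructor <;> nlinarith [hσ1.1, hσ1.2]
        · simp only [Prod.snd_add, Prod.smul_snd, smul_eq_mul, mem_Icc]
          constructor <;> nlinarith [hσ2.1, hσ2.2]
      have h4 := le_trans (le_trans helem (le_max_right _ _)) (hle_sup i)
      linarith
  -- now conclude
  apply Real.sSup_le
  · rintro x ⟨r, hr, rfl⟩
    apply Real.sSup_le
    · rintro w ⟨c, d, h1, h2, h3, h4, rfl⟩
      exact key r c d hr h1 h2 h3 h4
    · linarith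
  · linarith
end
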